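/- Let U, V be open neighborhoods of 0 in ℂ × ℂ, let φ = (φ₁, φ₂) : U → V be a biholomorphism with φ(0) = 0, let g be complex analytic on V, and set f := g ∘ φ. Let α : ℂ → ℂ be analytic near 0 with α(0) = 0, assume ψ(y) := φ₂(α(y), y) has vanishing order exactly 1 at 0, and let β(w) := φ₁(α(ψ⁻¹(w)), ψ⁻¹(w)), so that φ(α(y), y) = (β(ψ(y)), ψ(y)) near 0. Assume y ↦ f_x(α(y),y) and y ↦ f_y(α(y),y) do not both vanish identically near 0, and let L_f := min( ord₀(y ↦ f_x(α(y),y)), ord₀(y ↦ f_y(α(y),y)) ) and L_g := min( ord₀(w ↦ g_x(β(w),w)), ord₀(w ↦ g_y(β(w),w)) ). Define the gradient degree d_f(α) as the least natural number q ≥ 1 such that inf over u ∈ ℂ of min( ord₀(y ↦ f_x(α(y)+u y^q, y)), ord₀(y ↦ f_y(α(y)+u y^q, y)) ) equals L_f, and define d_g(β) analogously with g, β, L_g. Then d_f(α) = d_g(β). (The gradient degree of corresponding arcs is the same: d_{φ(α)} = d_α.) -/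

import Mathlib

open Filter

/-- The vanishing order at `0` of a function `u : ℂ → ℂ`: the least `n` such that the
`n`-th Taylor coefficient of `u` at `0` is nonzero, in `ℕ∞` (`⊤` if none is). -/
noncomputable def ord₀ (u : ℂ → ℂ) : ℕ∞ :=
  sInf ((fun n : ℕ => (n : ℕ∞)) '' {n : ℕ | iteratedDeriv n u 0 ≠ 0})

/-- `Λ_f(q)`: the infimum over `u ∈ ℂ` of the minimum of the vanishing orders at `0` of
`y ↦ f_x(α(y)+u y^q, y)` and `y ↦ f_y(α(y)+u y^q, y)`. -/
noncomputable def gradOrdPert (f : ℂ × ℂ → ℂ) (α : ℂ → ℂ) (q : ℕ) : ℕ∞ :=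
  ⨅ u : ℂ,
    min (ord₀ (fun y => fderiv ℂ f (α y + u * y ^ q, y) (1, 0)))
        (ord₀ (fun y => fderiv ℂ f (α y + u * y ^ q, y) (0, 1)))

/-!
Gradient orders along arcs are invariant under a biholomorphism: `∇f = ∇g ∘ φ · Dφ` with `Dφ`
invertible, so the gradient of `f` along `γ` and that of `g` along `φ ∘ γ` vanish to the same
order, and reparametrizing an arc by a map of order one changes nothing. Since `φ` maps
`y ↦ (α y, y)` to `w ↦ (β w, w)` reparametrized by `ψ`, this gives `L_f = L_g`.

Write `Λ(q)` for `gradOrdPert`. For `q ≥ 1` and generic `u`, `φ` maps `y ↦ (α y + u y^q, y)`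
to `y ↦ (β w + v(y) w^q, w)` with `w = ψ_u(y)` of order one and `v` analytic, because the
Taylor coefficients below `q` do not depend on `u`. A family `F(x, y)` whose slices `F(x, ·)`
all vanish to order `n` still does so along any graph `y ↦ (v y, y)`; for
`F(x, ·) = ∇g(β w + x w^q, w)` this gives `Λ_g(q) ≤ Λ_f(q)`, and `φ⁻¹` gives the reverse
inequality. So `{q ≥ 1 | Λ(q) = L}` is the same set for `f, α` and for `g, β`.
-/

open Topology

section AnalyticOrder

variable {𝕜 : Type*} [NontriviallyNormedField 𝕜] {E F G : Type*}
  [NormedAddCommGroup E] [NormedSpace 𝕜 E] [NormedAddCommGroup F] [NormedSpace 𝕜 F]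
  [NormedAddCommGroup G] [NormedSpace 𝕜 G] {z₀ : 𝕜}

theorem le_analyticOrderAt_bilinear (L : E →L[𝕜] F →L[𝕜] G) {A : 𝕜 → E} {B : 𝕜 → F}
    (hA : AnalyticAt 𝕜 A z₀) (hB : AnalyticAt 𝕜 B z₀) :
    analyticOrderAt A z₀ ≤ analyticOrderAt (fun z => L (A z) (B z)) z₀ := by
  refine ENat.forall_natCast_le_iff_le.mp fun n hn => ?_
  obtain ⟨M, hM, hAM⟩ := (natCast_le_analyticOrderAt hA).mp hn
  refine (natCast_le_analyticOrderAt ((L.analyticAt_bilinear _).comp (hA.prod hB))).mpr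
    ⟨fun z => L (M z) (B z), (L.analyticAt_bilinear _).comp (hM.prod hB), ?_⟩
  filter_upwards [hAM] with z hz
  simp [hz]

theorem analyticOrderAt_eq_min_apply {ℓ : 𝕜 → 𝕜 × 𝕜 →L[𝕜] E} (hℓ : AnalyticAt 𝕜 ℓ z₀) :
    analyticOrderAt ℓ z₀ = min (analyticOrderAt (fun z => ℓ z (1, 0)) z₀)
      (analyticOrderAt (fun z => ℓ z (0, 1)) z₀) := by
  have happly (e : 𝕜 × 𝕜) : analyticOrderAt ℓ z₀ ≤ analyticOrderAt (fun z => ℓ z e) z₀ :=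
    le_analyticOrderAt_bilinear (.id 𝕜 _) hℓ analyticAt_const
  have hℓe (e : 𝕜 × 𝕜) : AnalyticAt 𝕜 (fun z => ℓ z e) z₀ :=
    ((ContinuousLinearMap.apply 𝕜 E e).analyticAt _).comp hℓ
  have hsmulRight (c : 𝕜 × 𝕜 →L[𝕜] 𝕜) (e : 𝕜 × 𝕜) :
      analyticOrderAt (fun z => ℓ z e) z₀ ≤ analyticOrderAt (fun z => c.smulRight (ℓ z e)) z₀ :=
    le_analyticOrderAt_bilinear (ContinuousLinearMap.smulRightL 𝕜 (𝕜 × 𝕜) E).flip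
      (hℓe e) analyticAt_const
  have hdecomp : ℓ = (fun z => (ContinuousLinearMap.fst 𝕜 𝕜 𝕜).smulRight (ℓ z (1, 0))) +
      fun z => (ContinuousLinearMap.snd 𝕜 𝕜 𝕜).smulRight (ℓ z (0, 1)) := by
    ext z <;> simp
  refine le_antisymm (le_min (happly _) (happly _)) ?_
  conv_rhs => rw [hdecomp]
  exact (min_le_min (hsmulRight _ _) (hsmulRight _ _)).trans le_analyticOrderAt_add

theorem analyticOrderAt_le_of_iteratedDeriv_ne_zero [CharZero 𝕜] [CompleteSpace E] {f : 𝕜 → E}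
    (hf : AnalyticAt 𝕜 f z₀) {n : ℕ} (h : iteratedDeriv n f z₀ ≠ 0) :
    analyticOrderAt f z₀ ≤ n := by
  by_contra! hlt
  exact h ((natCast_le_analyticOrderAt_iff_iteratedDeriv_eq_zero hf).mp
    (by exact_mod_cast Order.add_one_le_of_lt hlt) n n.lt_succ_self)

theorem exists_eventuallyEq_mul_of_le_analyticOrderAt {a b : 𝕜 → 𝕜} (ha : AnalyticAt 𝕜 a z₀)
    (hb : AnalyticAt 𝕜 b z₀) {n : ℕ} (hbn : analyticOrderAt b z₀ = n)
    (han : (n : ℕ∞) ≤ analyticOrderAt a z₀) : ∃ c, AnalyticAt 𝕜 c z₀ ∧ a =ᶠ[𝓝 z₀] c * b := by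
  obtain ⟨b', hb', hb'0, hbb'⟩ := hb.analyticOrderAt_eq_natCast.mp hbn
  obtain ⟨a', ha', haa'⟩ := (natCast_le_analyticOrderAt ha).mp han
  refine ⟨a' / b', ha'.div hb' hb'0, ?_⟩
  filter_upwards [haa', hbb', hb'.continuousAt.eventually_ne hb'0] with z haz hbz hz
  simp only [haz, hbz, smul_eq_mul, Pi.mul_apply, Pi.div_apply]
  field_simp

end AnalyticOrder

theorem natCast_le_ord₀_iff {u : ℂ → ℂ} {n : ℕ} :
    (n : ℕ∞) ≤ ord₀ u ↔ ∀ k < n, iteratedDeriv k u 0 = 0 := by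
  simp only [ord₀, le_sInf_iff, Set.forall_mem_image, Set.mem_ofPred_eq, Nat.cast_le]
  exact forall_congr' fun k => by grind

theorem ord₀_eq_analyticOrderAt {u : ℂ → ℂ} (hu : AnalyticAt ℂ u 0) :
    ord₀ u = analyticOrderAt u 0 :=
  ENat.eq_of_forall_natCast_le_iff fun n => by
    rw [natCast_le_ord₀_iff, natCast_le_analyticOrderAt_iff_iteratedDeriv_eq_zero hu]

theorem deriv_ne_zero_of_ord₀_eq_one {u : ℂ → ℂ} (hu : AnalyticAt ℂ u 0) (h : ord₀ u = 1) :
    deriv u 0 ≠ 0 := by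
  have h1 : analyticOrderAt u 0 = (1 : ℕ) := by rw [← ord₀_eq_analyticOrderAt hu, h]; rfl
  simpa using ((analyticOrderAt_eq_nat_iff_iteratedDeriv_eq_zero hu).mp h1).2

section Slices

variable {E : Type*} [NormedAddCommGroup E] [NormedSpace ℂ E] {F : ℂ × ℂ → E} {a b : ℂ}

theorem AnalyticAt.slice_snd (hF : AnalyticAt ℂ F (a, b)) : AnalyticAt ℂ (fun y => F (a, y)) b :=
  hF.comp (f := fun y => (a, y)) (analyticAt_const.prod analyticAt_id)

theorem hasDerivAt_slice_fst (hF : DifferentiableAt ℂ F (a, b)) :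
    HasDerivAt (fun x => F (x, b)) (fderiv ℂ F (a, b) (1, 0)) a :=
  hF.hasFDerivAt.comp_hasDerivAt a ((hasDerivAt_id a).prodMk (hasDerivAt_const a b))

theorem hasDerivAt_slice_snd (hF : DifferentiableAt ℂ F (a, b)) :
    HasDerivAt (fun y => F (a, y)) (fderiv ℂ F (a, b) (0, 1)) b :=
  hF.hasFDerivAt.comp_hasDerivAt b ((hasDerivAt_const b a).prodMk (hasDerivAt_id b))

theorem hasDerivAt_comp_graph {v : ℂ → ℂ} (hF : DifferentiableAt ℂ F (v b, b))
    (hv : DifferentiableAt ℂ v b) :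
    HasDerivAt (fun y => F (v y, y))
      (deriv v b • fderiv ℂ F (v b, b) (1, 0) + fderiv ℂ F (v b, b) (0, 1)) b := by
  have h := hF.hasFDerivAt.comp_hasDerivAt (f := fun y => (v y, y)) b
    (hv.hasDerivAt.prodMk (hasDerivAt_id b))
  have hsplit : ((deriv v b, 1) : ℂ × ℂ) = deriv v b • (1, 0) + (0, 1) := by simp
  rwa [hsplit, map_add, map_smul] at h

variable [CompleteSpace E]

theorem AnalyticAt.fderiv_apply {X : Type*} [NormedAddCommGroup X] [NormedSpace ℂ X]
    {G : X → E} {p : X} (hG : AnalyticAt ℂ G p) (v : X) :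
    AnalyticAt ℂ (fun q => fderiv ℂ G q v) p :=
  ((ContinuousLinearMap.apply ℂ E v).analyticAt _).comp hG.fderiv

theorem AnalyticAt.fderiv_fderiv_apply_comm {X : Type*} [NormedAddCommGroup X]
    [NormedSpace ℂ X] {G : X → E} {p : X} (hG : AnalyticAt ℂ G p) (v w : X) :
    fderiv ℂ (fun q => fderiv ℂ G q v) p w = fderiv ℂ (fun q => fderiv ℂ G q w) p v := by
  have hG' := hG.fderiv.differentiableAt
  rw [fderiv_clm_apply hG' (differentiableAt_const v),
    fderiv_clm_apply hG' (differentiableAt_const w)]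
  simpa using hG.contDiffAt.isSymmSndFDerivAt_of_omega.eq w v

theorem AnalyticAt.eventually_analyticAt_slice_fst (hF : AnalyticAt ℂ F (a, b)) :
    ∀ᶠ x in 𝓝 a, AnalyticAt ℂ F (x, b) :=
  ((Continuous.prodMk_left b).tendsto a).eventually hF.eventually_analyticAt

theorem AnalyticAt.eventually_analyticAt_slice_snd (hF : AnalyticAt ℂ F (a, b)) :
    ∀ᶠ y in 𝓝 b, AnalyticAt ℂ F (a, y) :=
  ((Continuous.prodMk_right a).tendsto b).eventually hF.eventually_analyticAt

theorem deriv_slice_snd_eventuallyEq (hF : AnalyticAt ℂ F (a, b)) :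
    deriv (fun y => F (a, y)) =ᶠ[𝓝 b] fun y => fderiv ℂ F (a, y) (0, 1) := by
  filter_upwards [hF.eventually_analyticAt_slice_snd] with y hy
  exact (hasDerivAt_slice_snd hy.differentiableAt).deriv

theorem iteratedDeriv_succ_slice_snd (hF : AnalyticAt ℂ F (a, b)) (k : ℕ) :
    iteratedDeriv (k + 1) (fun y => F (a, y)) b =
      iteratedDeriv k (fun y => fderiv ℂ F (a, y) (0, 1)) b := by
  rw [iteratedDeriv_succ']
  exact (deriv_slice_snd_eventuallyEq hF).iteratedDeriv_eq k

theorem hasDerivAt_iteratedDeriv_slice (hF : AnalyticAt ℂ F (a, b)) (k : ℕ) :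
    HasDerivAt (fun x => iteratedDeriv k (fun y => F (x, y)) b)
      (iteratedDeriv k (fun y => fderiv ℂ F (a, y) (1, 0)) b) a := by
  induction k generalizing F with
  | zero => simpa using hasDerivAt_slice_fst hF.differentiableAt
  | succ k ih =>
    have hshift : (fun x => iteratedDeriv (k + 1) (fun y => F (x, y)) b) =ᶠ[𝓝 a]
        fun x => iteratedDeriv k (fun y => fderiv ℂ F (x, y) (0, 1)) b := by
      filter_upwards [hF.eventually_analyticAt_slice_fst] with x hx
      exact iteratedDeriv_succ_slice_snd hx k
    have hcomm :
        iteratedDeriv k (fun y => fderiv ℂ (fun p => fderiv ℂ F p (0, 1)) (a, y) (1, 0)) b =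
          iteratedDeriv (k + 1) (fun y => fderiv ℂ F (a, y) (1, 0)) b := by
      rw [iteratedDeriv_succ_slice_snd (hF.fderiv_apply _) k]
      refine EventuallyEq.iteratedDeriv_eq k ?_
      filter_upwards [hF.eventually_analyticAt_slice_snd] with y hy
      exact hy.fderiv_fderiv_apply_comm _ _
    exact hcomm ▸ (ih (hF.fderiv_apply _)).congr_of_eventuallyEq hshift

theorem differentiable_iteratedDeriv_slice (hF : ∀ x, AnalyticAt ℂ F (x, b)) (k : ℕ) :
    Differentiable ℂ fun x => iteratedDeriv k (fun y => F (x, y)) b :=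
  fun x => (hasDerivAt_iteratedDeriv_slice (hF x) k).differentiableAt

theorem eventually_le_analyticOrderAt_slice_fderiv_fst (hF : AnalyticAt ℂ F (a, b)) {n : ℕ}
    (h : ∀ᶠ x in 𝓝 a, (n : ℕ∞) ≤ analyticOrderAt (fun y => F (x, y)) b) :
    ∀ᶠ x in 𝓝 a, (n : ℕ∞) ≤ analyticOrderAt (fun y => fderiv ℂ F (x, y) (1, 0)) b := by
  filter_upwards [h.eventually_nhds, hF.eventually_analyticAt_slice_fst] with x hx hFx
  rw [natCast_le_analyticOrderAt_iff_iteratedDeriv_eq_zero (hFx.fderiv_apply _).slice_snd]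
  intro k hk
  have hcoeff : (fun x' => iteratedDeriv k (fun y => F (x', y)) b) =ᶠ[𝓝 x] fun _ => 0 := by
    filter_upwards [hx, hFx.eventually_analyticAt_slice_fst] with x' hx' hFx'
    exact (natCast_le_analyticOrderAt_iff_iteratedDeriv_eq_zero hFx'.slice_snd).mp hx' k hk
  exact (hasDerivAt_iteratedDeriv_slice hFx k).unique
    ((hasDerivAt_const x 0).congr_of_eventuallyEq hcoeff)

theorem eventually_le_analyticOrderAt_slice_fderiv_snd (hF : AnalyticAt ℂ F (a, b)) {n : ℕ}
    (h : ∀ᶠ x in 𝓝 a, ((n + 1 : ℕ) : ℕ∞) ≤ analyticOrderAt (fun y => F (x, y)) b) :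
    ∀ᶠ x in 𝓝 a, (n : ℕ∞) ≤ analyticOrderAt (fun y => fderiv ℂ F (x, y) (0, 1)) b := by
  filter_upwards [h, hF.eventually_analyticAt_slice_fst] with x hx hFx
  have hzero : F (x, b) = 0 := apply_eq_zero_of_analyticOrderAt_ne_zero
    (f := fun y => F (x, y)) ((Nat.cast_pos.mpr n.succ_pos).trans_le hx).ne'
  rw [← analyticOrderAt_congr (deriv_slice_snd_eventuallyEq hFx),
    analyticOrderAt_deriv_ge_iff hFx.slice_snd hzero]
  exact_mod_cast hx

/-- Induction on `n`: the derivative along the graph is `v' • ∂₁F + ∂₂F`, and the slices of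
`∂₂F` vanish to order `n`, as do those of `∂₁F`, whose Taylor coefficients are `x`-derivatives
of coefficients that vanish identically. -/
theorem le_analyticOrderAt_comp_graph {v : ℂ → ℂ} {n : ℕ} (hF : AnalyticAt ℂ F (v b, b))
    (hv : AnalyticAt ℂ v b)
    (h : ∀ᶠ x in 𝓝 (v b), (n : ℕ∞) ≤ analyticOrderAt (fun y => F (x, y)) b) :
    (n : ℕ∞) ≤ analyticOrderAt (fun y => F (v y, y)) b := by
  induction n generalizing F with
  | zero => simp
  | succ n ih =>
    have hgraph : AnalyticAt ℂ (fun y => (v y, y)) b := hv.prod analyticAt_id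
    have hFv : AnalyticAt ℂ (fun y => F (v y, y)) b := hF.comp (f := fun y => (v y, y)) hgraph
    have hzero : F (v b, b) = 0 := apply_eq_zero_of_analyticOrderAt_ne_zero
      (f := fun y => F (v b, y)) ((Nat.cast_pos.mpr n.succ_pos).trans_le h.self_of_nhds).ne'
    have hderiv : deriv (fun y => F (v y, y)) =ᶠ[𝓝 b] fun y =>
        deriv v y • fderiv ℂ F (v y, y) (1, 0) + fderiv ℂ F (v y, y) (0, 1) := by
      filter_upwards [hgraph.continuousAt.eventually hF.eventually_analyticAt,
        hv.eventually_analyticAt] with y hFy hvy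
      exact (hasDerivAt_comp_graph hFy.differentiableAt hvy.differentiableAt).deriv
    rw [Nat.cast_succ, ← analyticOrderAt_deriv_ge_iff hFv hzero, analyticOrderAt_congr hderiv]
    refine le_trans (le_min ?_ ?_) le_analyticOrderAt_add
    · have hFfst : AnalyticAt ℂ (fun y => fderiv ℂ F (v y, y) (1, 0)) b :=
        (hF.fderiv_apply _).comp (f := fun y => (v y, y)) hgraph
      refine (ih (hF.fderiv_apply _) (eventually_le_analyticOrderAt_slice_fderiv_fst hF
        (h.mono fun x hx => le_trans (by simp) hx))).trans ?_
      rw [show (fun y => deriv v y • fderiv ℂ F (v y, y) (1, 0)) =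
          deriv v • fun y => fderiv ℂ F (v y, y) (1, 0) from rfl,
        analyticOrderAt_smul hv.deriv hFfst]
      exact le_add_self
    · exact ih (hF.fderiv_apply _) (eventually_le_analyticOrderAt_slice_fderiv_snd hF h)

/-- The `y`-Taylor coefficients below `q` of `W (α y + u y^q, y)` do not depend on `u`: their
`u`-derivatives are coefficients of `y^q • ∂₁W (α y + u y^q, y)`. -/
theorem le_analyticOrderAt_sub_perturb {W : ℂ × ℂ → E} {α : ℂ → ℂ}
    (hW : AnalyticAt ℂ W (α 0, 0)) (hα : AnalyticAt ℂ α 0) {q : ℕ} (hq : q ≠ 0) (u : ℂ) :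
    (q : ℕ∞) ≤ analyticOrderAt (fun y => W (α y + u * y ^ q, y) - W (α y, y)) 0 := by
  set H : ℂ × ℂ → E := fun p => W (α p.2 + p.1 * p.2 ^ q, p.2)
  have hcurve (x : ℂ) : AnalyticAt ℂ (fun y => (α y + x * y ^ q, y)) 0 :=
    (hα.add (analyticAt_const.mul (analyticAt_id.pow q))).prod analyticAt_id
  have hH (x : ℂ) : AnalyticAt ℂ H (x, 0) :=
    hW.comp_of_eq (((hα.comp (f := Prod.snd) analyticAt_snd).add
      (analyticAt_fst.mul (analyticAt_snd.pow q))).prod analyticAt_snd) (by simp [hq])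
  have hHfst (x : ℂ) : (fun y => fderiv ℂ H (x, y) (1, 0)) =ᶠ[𝓝 0]
      fun y => y ^ q • fderiv ℂ W (α y + x * y ^ q, y) (1, 0) := by
    have hWx : AnalyticAt ℂ W ((fun y => (α y + x * y ^ q, y)) 0) := by simpa [hq] using hW
    filter_upwards [(hH x).eventually_analyticAt_slice_snd,
      (hcurve x).continuousAt.eventually hWx.eventually_analyticAt] with y hHy hWy
    have hinner : HasDerivAt (fun x' => α y + x' * y ^ q) (y ^ q) x := by
      simpa using ((hasDerivAt_id x).mul_const (y ^ q)).const_add (α y)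
    have hWy' : HasDerivAt (fun x' => W (x', y)) (fderiv ℂ W (α y + x * y ^ q, y) (1, 0))
        (α y + x * y ^ q) := hasDerivAt_slice_fst hWy.differentiableAt
    exact (hasDerivAt_slice_fst hHy.differentiableAt).unique (hWy'.scomp x hinner :)
  have hcoeff (k : ℕ) (hk : k < q) (x : ℂ) :
      deriv (fun x' => iteratedDeriv k (fun y => H (x', y)) 0) x = 0 := by
    rw [(hasDerivAt_iteratedDeriv_slice (hH x) k).deriv]
    refine (natCast_le_analyticOrderAt_iff_iteratedDeriv_eq_zero
      ((hH x).fderiv_apply _).slice_snd).mp ?_ k hk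
    have hWx : AnalyticAt ℂ (fun y => fderiv ℂ W (α y + x * y ^ q, y) (1, 0)) 0 :=
      (hW.fderiv_apply _).comp_of_eq (hcurve x) (by simp [hq])
    rw [analyticOrderAt_congr (hHfst x)]
    exact (natCast_le_analyticOrderAt ((analyticAt_id.pow q).smul hWx)).mpr ⟨_, hWx, by simp⟩
  have hdiff : (q : ℕ∞) ≤ analyticOrderAt (fun y => H (u, y) - H (0, y)) 0 := by
    rw [natCast_le_analyticOrderAt_iff_iteratedDeriv_eq_zero
      ((hH u).slice_snd.fun_sub (hH 0).slice_snd)]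
    intro k hk
    rw [iteratedDeriv_fun_sub (hH u).slice_snd.contDiffAt (hH 0).slice_snd.contDiffAt, sub_eq_zero]
    exact is_const_of_deriv_eq_zero (differentiable_iteratedDeriv_slice hH k) (hcoeff k hk) u 0
  simpa [H] using hdiff

end Slices

def perturbedArc (α : ℂ → ℂ) (q : ℕ) (u y : ℂ) : ℂ × ℂ := (α y + u * y ^ q, y)

theorem perturbedArc_zero (α : ℂ → ℂ) {q : ℕ} (hq : q ≠ 0) (u : ℂ) :
    perturbedArc α q u 0 = (α 0, 0) := by
  simp [perturbedArc, hq]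

theorem analyticAt_perturbedArc {α : ℂ → ℂ} (hα : AnalyticAt ℂ α 0) (q : ℕ) (u : ℂ) :
    AnalyticAt ℂ (perturbedArc α q u) 0 :=
  (hα.add (analyticAt_const.mul (analyticAt_id.pow q))).prod analyticAt_id

section GradientOrder

variable {E X Y : Type*} [NormedAddCommGroup E] [NormedSpace ℂ E] [NormedAddCommGroup X]
  [NormedSpace ℂ X] [NormedAddCommGroup Y] [NormedSpace ℂ Y] {γ : ℂ → X}

/-- By `min_ord₀_eq_gradientOrder`, this is the paper's `min (ord₀ F_x) (ord₀ F_y)` along `γ`. -/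
noncomputable def gradientOrder (F : X → E) (γ : ℂ → X) : ℕ∞ :=
  analyticOrderAt (fun y => fderiv ℂ F (γ y)) 0

theorem gradientOrder_congr {F G : X → E} (hγ : ContinuousAt γ 0) (h : F =ᶠ[𝓝 (γ 0)] G) :
    gradientOrder F γ = gradientOrder G γ :=
  analyticOrderAt_congr (hγ.eventually (h.eventuallyEq_nhds.mono fun _ hx => hx.fderiv_eq))

theorem gradientOrder_comp_of_deriv_ne_zero {F : X → E} {ψ : ℂ → ℂ} (hψ : AnalyticAt ℂ ψ 0)
    (hψ0 : ψ 0 = 0) (hψ' : deriv ψ 0 ≠ 0) : gradientOrder F (γ ∘ ψ) = gradientOrder F γ := by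
  have h := analyticOrderAt_comp_of_deriv_ne_zero (f := fun w => fderiv ℂ F (γ w)) hψ hψ'
  rwa [hψ0] at h

variable [CompleteSpace E]

theorem gradientOrder_comp [CompleteSpace X] [CompleteSpace Y] {g : Y → E} {φ : X → Y}
    {φinv : Y → X} (hγ : AnalyticAt ℂ γ 0) (hφ : AnalyticAt ℂ φ (γ 0))
    (hφinv : AnalyticAt ℂ φinv (φ (γ 0))) (hg : AnalyticAt ℂ g (φ (γ 0)))
    (hleft : ∀ᶠ x in 𝓝 (γ 0), φinv (φ x) = x) (hright : ∀ᶠ z in 𝓝 (φ (γ 0)), φ (φinv z) = z) :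
    gradientOrder (g ∘ φ) γ = gradientOrder g (φ ∘ γ) := by
  have hgφ : AnalyticAt ℂ (g ∘ φ) (γ 0) := hg.comp hφ
  have hfwd : ∀ᶠ x in 𝓝 (γ 0), fderiv ℂ (g ∘ φ) x = (fderiv ℂ g (φ x)).comp (fderiv ℂ φ x) := by
    filter_upwards [hφ.eventually_analyticAt,
      hφ.continuousAt.eventually hg.eventually_analyticAt] with x hφx hgx
    exact fderiv_comp x hgx.differentiableAt hφx.differentiableAt
  have hbwd : ∀ᶠ x in 𝓝 (γ 0),
      fderiv ℂ g (φ x) = (fderiv ℂ (g ∘ φ) x).comp (fderiv ℂ φinv (φ x)) := by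
    filter_upwards [hleft, hgφ.eventually_analyticAt,
      hφ.continuousAt.eventually hright.eventually_nhds,
      hφ.continuousAt.eventually hφinv.eventually_analyticAt] with x hx hgφx hrx hφinvx
    have hg_eq : g =ᶠ[𝓝 (φ x)] (g ∘ φ) ∘ φinv := hrx.mono fun z hz => by simp [hz]
    rw [hg_eq.fderiv_eq, fderiv_comp (φ x) (by rw [hx]; exact hgφx.differentiableAt)
      hφinvx.differentiableAt, hx]
  have hDg : AnalyticAt ℂ (fun y => fderiv ℂ g (φ (γ y))) 0 :=
    hg.fderiv.comp_of_eq (hφ.comp hγ) rfl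
  have hDgφ : AnalyticAt ℂ (fun y => fderiv ℂ (g ∘ φ) (γ y)) 0 := hgφ.fderiv.comp hγ
  have hDφ : AnalyticAt ℂ (fun y => fderiv ℂ φ (γ y)) 0 := hφ.fderiv.comp hγ
  have hDφinv : AnalyticAt ℂ (fun y => fderiv ℂ φinv (φ (γ y))) 0 :=
    hφinv.fderiv.comp_of_eq (hφ.comp hγ) rfl
  apply le_antisymm
  · calc gradientOrder (g ∘ φ) γ
        ≤ analyticOrderAt (fun y => (fderiv ℂ (g ∘ φ) (γ y)).comp (fderiv ℂ φinv (φ (γ y)))) 0 :=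
          le_analyticOrderAt_bilinear (ContinuousLinearMap.compL ℂ Y X E) hDgφ hDφinv
      _ = gradientOrder g (φ ∘ γ) := by
          refine (analyticOrderAt_congr ?_).symm
          filter_upwards [hγ.continuousAt.eventually hbwd] with y hy using hy
  · calc gradientOrder g (φ ∘ γ)
        ≤ analyticOrderAt (fun y => (fderiv ℂ g (φ (γ y))).comp (fderiv ℂ φ (γ y))) 0 :=
          le_analyticOrderAt_bilinear (ContinuousLinearMap.compL ℂ X Y E) hDg hDφ
      _ = gradientOrder (g ∘ φ) γ := by
          refine (analyticOrderAt_congr ?_).symm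
          filter_upwards [hγ.continuousAt.eventually hfwd] with y hy using hy

theorem exists_ne_zero_and_ne_zero {G : Type*} [NormedAddCommGroup G] {C : ℂ → G}
    {c : ℂ → E} {u₀ z : ℂ} (hC : ContinuousAt C u₀) (hCu₀ : C u₀ ≠ 0)
    (hc : Differentiable ℂ c) (hcz : c z ≠ 0) : ∃ u, C u ≠ 0 ∧ c u ≠ 0 := by
  by_contra! h
  have hc0 : c =ᶠ[𝓝 u₀] 0 := by
    filter_upwards [hC.eventually_ne hCu₀] with u hu using h u hu
  have hc_an : AnalyticOnNhd ℂ c Set.univ := fun w _ => hc.analyticAt w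
  exact hcz (hc_an.eqOn_zero_of_preconnected_of_eventuallyEq_zero isPreconnected_univ
    (Set.mem_univ u₀) hc0 (Set.mem_univ z))

end GradientOrder

theorem min_ord₀_eq_gradientOrder {F : ℂ × ℂ → ℂ} {γ : ℂ → ℂ × ℂ}
    (hF : AnalyticAt ℂ F (γ 0)) (hγ : AnalyticAt ℂ γ 0) :
    min (ord₀ fun y => fderiv ℂ F (γ y) (1, 0)) (ord₀ fun y => fderiv ℂ F (γ y) (0, 1)) =
      gradientOrder F γ := by
  have hDF : AnalyticAt ℂ (fun y => fderiv ℂ F (γ y)) 0 := hF.fderiv.comp hγ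
  have hDF_apply (e : ℂ × ℂ) : AnalyticAt ℂ (fun y => fderiv ℂ F (γ y) e) 0 :=
    (hF.fderiv_apply e).comp hγ
  rw [gradientOrder, analyticOrderAt_eq_min_apply hDF, ord₀_eq_analyticOrderAt (hDF_apply _),
    ord₀_eq_analyticOrderAt (hDF_apply _)]

theorem gradOrdPert_eq_iInf_gradientOrder {F : ℂ × ℂ → ℂ} {α : ℂ → ℂ} {q : ℕ}
    (hF : AnalyticAt ℂ F (α 0, 0)) (hα : AnalyticAt ℂ α 0) (hq : q ≠ 0) :
    gradOrdPert F α q = ⨅ u, gradientOrder F (perturbedArc α q u) :=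
  iInf_congr fun u => min_ord₀_eq_gradientOrder (by simpa [perturbedArc, hq] using hF)
    (analyticAt_perturbedArc hα q u)

/-- Writing `P = β ∘ ψ + v * ψ ^ q`, the gradient along `(P, ψ)` is `H (v y, y)`, where each
slice `H (x, ·)` is the gradient along `perturbedArc β q x` reparametrized by `ψ`. -/
theorem gradOrdPert_le_gradientOrder_of_contact {g : ℂ × ℂ → ℂ} {β P ψ : ℂ → ℂ} {q : ℕ}
    (hg : AnalyticAt ℂ g (β 0, 0)) (hβ : AnalyticAt ℂ β 0) (hq : q ≠ 0) (hP : AnalyticAt ℂ P 0)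
    (hψ : AnalyticAt ℂ ψ 0) (hψ0 : ψ 0 = 0) (hψ' : deriv ψ 0 ≠ 0)
    (hcontact : (q : ℕ∞) ≤ analyticOrderAt (fun y => P y - β (ψ y)) 0) :
    gradOrdPert g β q ≤ gradientOrder g (fun y => (P y, ψ y)) := by
  have hψq : analyticOrderAt (ψ ^ q) 0 = q := by
    rw [analyticOrderAt_pow hψ, hψ.analyticOrderAt_eq_one_of_zero_deriv_ne_zero hψ0 hψ']
    simp
  obtain ⟨v, hv, hPv⟩ := exists_eventuallyEq_mul_of_le_analyticOrderAt
    (hP.sub (hβ.comp_of_eq hψ hψ0)) (hψ.pow q) hψq hcontact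
  set H : ℂ × ℂ → ℂ × ℂ →L[ℂ] ℂ := fun p => fderiv ℂ g (perturbedArc β q p.1 (ψ p.2))
  have hψ2 : AnalyticAt ℂ (fun p : ℂ × ℂ => ψ p.2) (v 0, 0) :=
    hψ.comp (f := Prod.snd) analyticAt_snd
  have hH : AnalyticAt ℂ H (v 0, 0) :=
    hg.fderiv.comp_of_eq (((hβ.comp_of_eq hψ2 hψ0).add (analyticAt_fst.mul (hψ2.pow q))).prod hψ2)
      (by simp [perturbedArc, hψ0, hq])
  have hgraph :
      gradientOrder g (fun y => (P y, ψ y)) = analyticOrderAt (fun y => H (v y, y)) 0 := by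
    refine analyticOrderAt_congr (hPv.mono fun y hy => ?_)
    simp only [H, perturbedArc, Pi.sub_apply, Pi.mul_apply, Pi.pow_apply,
      Function.comp_apply] at hy ⊢
    rw [← hy, add_sub_cancel]
  rw [gradOrdPert_eq_iInf_gradientOrder hg hβ hq, hgraph]
  refine ENat.forall_natCast_le_iff_le.mp fun n hn =>
    le_analyticOrderAt_comp_graph hH hv (.of_forall fun x => ?_)
  calc (n : ℕ∞) ≤ gradientOrder g (perturbedArc β q x) := hn.trans (iInf_le _ x)
    _ = analyticOrderAt (fun y => H (x, y)) 0 :=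
      (gradientOrder_comp_of_deriv_ne_zero hψ hψ0 hψ').symm

/-- At a minimiser `u₀` the `n`-th coefficient of the gradient is nonzero, hence nonzero for
`u` near `u₀`; the first coefficient of `S` along the perturbed arcs is an entire function of
`u`, nonzero at `0`, so it cannot vanish on that neighbourhood. -/
theorem exists_gradientOrder_perturbedArc_le_iInf {f S : ℂ × ℂ → ℂ} {α : ℂ → ℂ} {q : ℕ}
    (hf : AnalyticAt ℂ f (α 0, 0)) (hS : AnalyticAt ℂ S (α 0, 0)) (hα : AnalyticAt ℂ α 0)
    (hq : q ≠ 0) (hS' : deriv (fun y => S (α y, y)) 0 ≠ 0) :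
    ∃ u, gradientOrder f (perturbedArc α q u) ≤ ⨅ v, gradientOrder f (perturbedArc α q v) ∧
      deriv (fun y => S (perturbedArc α q u y)) 0 ≠ 0 := by
  obtain ⟨u₀, hu₀⟩ := ciInf_mem fun u => gradientOrder f (perturbedArc α q u)
  generalize ⨅ v, gradientOrder f (perturbedArc α q v) = N at hu₀ ⊢
  cases N with
  | top => exact ⟨0, le_top, by simpa [perturbedArc] using hS'⟩
  | coe n =>
    have hθ (x : ℂ) : AnalyticAt ℂ (fun p : ℂ × ℂ => perturbedArc α q p.1 p.2) (x, 0) :=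
      ((hα.comp (f := Prod.snd) analyticAt_snd).add
        (analyticAt_fst.mul (analyticAt_snd.pow q))).prod analyticAt_snd
    have hD (x : ℂ) :
        AnalyticAt ℂ (fun p : ℂ × ℂ => fderiv ℂ f (perturbedArc α q p.1 p.2)) (x, 0) :=
      hf.fderiv.comp_of_eq (hθ x) (by simp [perturbedArc, hq])
    have hS2 (x : ℂ) : AnalyticAt ℂ (fun p : ℂ × ℂ => S (perturbedArc α q p.1 p.2)) (x, 0) :=
      hS.comp_of_eq (hθ x) (by simp [perturbedArc, hq])
    have hCu₀ : iteratedDeriv n (fun y => fderiv ℂ f (perturbedArc α q u₀ y)) 0 ≠ 0 :=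
      ((analyticOrderAt_eq_nat_iff_iteratedDeriv_eq_zero (hD u₀).slice_snd).mp hu₀).2
    obtain ⟨u, hCu, hc1u⟩ := exists_ne_zero_and_ne_zero
      (differentiable_iteratedDeriv_slice hD n).continuous.continuousAt hCu₀
      (differentiable_iteratedDeriv_slice hS2 1) (z := 0) (by simpa [perturbedArc] using hS')
    exact ⟨u, analyticOrderAt_le_of_iteratedDeriv_ne_zero (hD u).slice_snd hCu, by simpa using hc1u⟩

structure IsBiholomorphGerm (φ φinv : ℂ × ℂ → ℂ × ℂ) : Prop where
  analyticAt : AnalyticAt ℂ φ 0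
  analyticAt_inv : AnalyticAt ℂ φinv 0
  map_zero : φ 0 = 0
  left_inv : ∀ᶠ p in 𝓝 0, φinv (φ p) = p
  right_inv : ∀ᶠ p in 𝓝 0, φ (φinv p) = p

namespace IsBiholomorphGerm

variable {φ φinv : ℂ × ℂ → ℂ × ℂ} {f g : ℂ × ℂ → ℂ} {α β ψ : ℂ → ℂ}

theorem symm (hΦ : IsBiholomorphGerm φ φinv) : IsBiholomorphGerm φinv φ where
  analyticAt := hΦ.analyticAt_inv
  analyticAt_inv := hΦ.analyticAt
  map_zero := by simpa [hΦ.map_zero] using hΦ.left_inv.self_of_nhds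
  left_inv := hΦ.right_inv
  right_inv := hΦ.left_inv

theorem gradientOrder_comp (hΦ : IsBiholomorphGerm φ φinv) (hg : AnalyticAt ℂ g 0)
    {γ : ℂ → ℂ × ℂ} (hγ : AnalyticAt ℂ γ 0) (hγ0 : γ 0 = 0) :
    gradientOrder (g ∘ φ) γ = gradientOrder g (φ ∘ γ) := by
  have hφγ0 : φ (γ 0) = 0 := by rw [hγ0, hΦ.map_zero]
  exact _root_.gradientOrder_comp hγ (hγ0 ▸ hΦ.analyticAt) (hφγ0 ▸ hΦ.analyticAt_inv)
    (hφγ0 ▸ hg) (hγ0 ▸ hΦ.left_inv) (hφγ0 ▸ hΦ.right_inv)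

theorem eq_zero_of_arc (hΦ : IsBiholomorphGerm φ φinv) (hα0 : α 0 = 0)
    (harc : ∀ᶠ y in 𝓝 0, φ (α y, y) = (β (ψ y), ψ y)) : ψ 0 = 0 ∧ β 0 = 0 := by
  have h := harc.self_of_nhds
  rw [hα0, Prod.mk_zero_zero, hΦ.map_zero, eq_comm, Prod.ext_iff] at h
  simp only [Prod.fst_zero, Prod.snd_zero] at h
  exact ⟨h.2, by simpa [h.2] using h.1⟩

theorem eventually_inv_arc (hΦ : IsBiholomorphGerm φ φinv) (hα : ContinuousAt α 0)
    (hα0 : α 0 = 0) {ψinv : ℂ → ℂ} (hψinv : ContinuousAt ψinv 0) (hψinv0 : ψinv 0 = 0)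
    (hψ : ∀ᶠ w in 𝓝 0, ψ (ψinv w) = w) (harc : ∀ᶠ y in 𝓝 0, φ (α y, y) = (β (ψ y), ψ y)) :
    ∀ᶠ w in 𝓝 0, φinv (β w, w) = (α (ψinv w), ψinv w) := by
  have hψinvT : Tendsto ψinv (𝓝 0) (𝓝 0) := by simpa [hψinv0] using hψinv.tendsto
  have hcurveT : Tendsto (fun w => (α (ψinv w), ψinv w)) (𝓝 0) (𝓝 0) := by
    simpa [hψinv0, hα0, Prod.mk_zero_zero] using
      ((hα.comp_of_eq hψinv hψinv0).prodMk hψinv).tendsto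
  filter_upwards [hψ, hψinvT.eventually harc, hcurveT.eventually hΦ.left_inv]
    with w hw harcw hleftw
  rw [← hleftw, harcw, hw]

theorem gradientOrder_arc_eq (hΦ : IsBiholomorphGerm φ φinv) (hg : AnalyticAt ℂ g 0)
    (hf : f =ᶠ[𝓝 0] g ∘ φ) (hα : AnalyticAt ℂ α 0) (hα0 : α 0 = 0) (hψ : AnalyticAt ℂ ψ 0)
    (hψ' : deriv ψ 0 ≠ 0) (harc : ∀ᶠ y in 𝓝 0, φ (α y, y) = (β (ψ y), ψ y)) :
    gradientOrder f (fun y => (α y, y)) = gradientOrder g (fun w => (β w, w)) := by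
  have hγ : AnalyticAt ℂ (fun y => (α y, y)) 0 := hα.prod analyticAt_id
  have hγ0 : (α 0, (0 : ℂ)) = 0 := by simp [hα0, Prod.mk_zero_zero]
  calc gradientOrder f (fun y => (α y, y))
      = gradientOrder (g ∘ φ) (fun y => (α y, y)) :=
        gradientOrder_congr hγ.continuousAt (by simpa [hγ0] using hf)
    _ = gradientOrder g (φ ∘ fun y => (α y, y)) := hΦ.gradientOrder_comp hg hγ hγ0
    _ = gradientOrder g ((fun w => (β w, w)) ∘ ψ) :=
        analyticOrderAt_congr (harc.mono fun y hy => by simp [hy])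
    _ = gradientOrder g (fun w => (β w, w)) :=
        gradientOrder_comp_of_deriv_ne_zero hψ (hΦ.eq_zero_of_arc hα0 harc).1 hψ'

theorem gradOrdPert_le (hΦ : IsBiholomorphGerm φ φinv) (hg : AnalyticAt ℂ g 0)
    (hf : f =ᶠ[𝓝 0] g ∘ φ) (hα : AnalyticAt ℂ α 0) (hα0 : α 0 = 0) (hβ : AnalyticAt ℂ β 0)
    (hψ' : deriv ψ 0 ≠ 0) (harc : ∀ᶠ y in 𝓝 0, φ (α y, y) = (β (ψ y), ψ y)) {q : ℕ}
    (hq : q ≠ 0) : gradOrdPert g β q ≤ gradOrdPert f α q := by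
  have hα0' : (α 0, (0 : ℂ)) = 0 := by simp [hα0, Prod.mk_zero_zero]
  have hβ0 : β 0 = 0 := (hΦ.eq_zero_of_arc hα0 harc).2
  have hf0 : AnalyticAt ℂ f 0 := (hg.comp_of_eq hΦ.analyticAt hΦ.map_zero).congr hf.symm
  have hφ2 : AnalyticAt ℂ (fun p => (φ p).2) 0 := analyticAt_snd.comp hΦ.analyticAt
  have hψeq : (fun y => (φ (α y, y)).2) =ᶠ[𝓝 0] ψ := harc.mono fun y hy => by simp [hy]
  obtain ⟨u, hu, hψu⟩ := exists_gradientOrder_perturbedArc_le_iInf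
    (hα0' ▸ hf0) (hα0' ▸ hφ2) hα hq (by rwa [hψeq.deriv_eq])
  set γ := perturbedArc α q u
  have hγ : AnalyticAt ℂ γ 0 := analyticAt_perturbedArc hα q u
  have hγ0 : γ 0 = 0 := by simp only [γ, perturbedArc_zero α hq, hα0']
  have hφγ : AnalyticAt ℂ (φ ∘ γ) 0 := hΦ.analyticAt.comp_of_eq hγ hγ0
  have hcontact : (q : ℕ∞) ≤ analyticOrderAt (fun y => (φ (γ y)).1 - β ((φ (γ y)).2)) 0 := by
    set W : ℂ × ℂ → ℂ := fun p => (φ p).1 - β ((φ p).2)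
    have hW : AnalyticAt ℂ W (α 0, 0) := hα0' ▸ (analyticAt_fst.comp hΦ.analyticAt).sub
      (hβ.comp_of_eq hφ2 (by simp [hΦ.map_zero]))
    refine (le_analyticOrderAt_sub_perturb hW hα hq u).trans_eq (analyticOrderAt_congr ?_)
    filter_upwards [harc] with y hy
    simp [hy, W, γ, perturbedArc]
  calc gradOrdPert g β q
      ≤ gradientOrder g (φ ∘ γ) :=
        gradOrdPert_le_gradientOrder_of_contact (by rwa [hβ0, Prod.mk_zero_zero]) hβ hq
          (analyticAt_fst.comp hφγ) (analyticAt_snd.comp hφγ) (by simp [hγ0, hΦ.map_zero]) hψu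
          hcontact
    _ = gradientOrder f γ :=
        ((gradientOrder_congr hγ.continuousAt (hγ0 ▸ hf)).trans
          (hΦ.gradientOrder_comp hg hγ hγ0)).symm
    _ ≤ ⨅ v, gradientOrder f (perturbedArc α q v) := hu
    _ = gradOrdPert f α q := (gradOrdPert_eq_iInf_gradientOrder (hα0' ▸ hf0) hα hq).symm

theorem gradOrdPert_eq (hΦ : IsBiholomorphGerm φ φinv) (hg : AnalyticAt ℂ g 0)
    (hα : AnalyticAt ℂ α 0) (hα0 : α 0 = 0) (hβ : AnalyticAt ℂ β 0) (hψ' : deriv ψ 0 ≠ 0)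
    {ψinv : ℂ → ℂ} (hψinv : AnalyticAt ℂ ψinv 0) (hψinv0 : ψinv 0 = 0)
    (hψright : ∀ᶠ w in 𝓝 0, ψ (ψinv w) = w)
    (harc : ∀ᶠ y in 𝓝 0, φ (α y, y) = (β (ψ y), ψ y)) {q : ℕ} (hq : q ≠ 0) :
    gradOrdPert (g ∘ φ) α q = gradOrdPert g β q := by
  have hgφ : AnalyticAt ℂ (g ∘ φ) 0 := hg.comp_of_eq hΦ.analyticAt hΦ.map_zero
  have hgφinv : g =ᶠ[𝓝 0] (g ∘ φ) ∘ φinv := hΦ.right_inv.mono fun p hp => by simp [hp]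
  have hψinv' : deriv ψinv 0 ≠ 0 := by
    have hψ : HasDerivAt ψ (deriv ψ 0) (ψinv 0) := by
      rw [hψinv0]
      exact (differentiableAt_of_deriv_ne_zero hψ').hasDerivAt
    rw [(hψ.of_local_left_inverse hψinv.continuousAt hψ' hψright).deriv]
    exact inv_ne_zero hψ'
  have harc' := hΦ.eventually_inv_arc hα.continuousAt hα0 hψinv.continuousAt hψinv0 hψright harc
  exact le_antisymm
    (hΦ.symm.gradOrdPert_le hgφ hgφinv hβ (hΦ.eq_zero_of_arc hα0 harc).2 hα hψinv' harc' hq)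
    (hΦ.gradOrdPert_le hg .rfl hα hα0 hβ hψ' harc hq)

end IsBiholomorphGerm

theorem gradient_degree_analytic_invariant_general
    (U V : Set (ℂ × ℂ)) (hUopen : IsOpen U) (hVopen : IsOpen V)
    (h0U : ((0 : ℂ), (0 : ℂ)) ∈ U) (h0V : ((0 : ℂ), (0 : ℂ)) ∈ V)
    (φ φinv : ℂ × ℂ → ℂ × ℂ)
    (hφ : ∀ p ∈ U, AnalyticAt ℂ φ p) (hφinv : ∀ p ∈ V, AnalyticAt ℂ φinv p)
    (hleft : ∀ p ∈ U, φinv (φ p) = p) (hright : ∀ p ∈ V, φ (φinv p) = p)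
    (hφ0 : φ (0, 0) = (0, 0))
    (g : ℂ × ℂ → ℂ) (hg : ∀ p ∈ V, AnalyticAt ℂ g p)
    (f : ℂ × ℂ → ℂ) (hf : f = g ∘ φ)
    (α : ℂ → ℂ) (hα : AnalyticAt ℂ α 0) (hα0 : α 0 = 0)
    (ψ : ℂ → ℂ) (hψ : ψ = fun y => (φ (α y, y)).2)
    (hψord : ord₀ ψ = 1)
    (ψinv : ℂ → ℂ) (hψinv : AnalyticAt ℂ ψinv 0) (hψinv0 : ψinv 0 = 0)
    (hψleft : ∀ᶠ y in nhds (0 : ℂ), ψinv (ψ y) = y)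
    (hψright : ∀ᶠ w in nhds (0 : ℂ), ψ (ψinv w) = w)
    (β : ℂ → ℂ) (hβ : β = fun w => (φ (α (ψinv w), ψinv w)).1)
    (Lf Lg : ℕ)
    (hLf : min (ord₀ (fun y => fderiv ℂ f (α y, y) (1, 0)))
               (ord₀ (fun y => fderiv ℂ f (α y, y) (0, 1))) = (Lf : ℕ∞))
    (hLg : min (ord₀ (fun w => fderiv ℂ g (β w, w) (1, 0)))
               (ord₀ (fun w => fderiv ℂ g (β w, w) (0, 1))) = (Lg : ℕ∞))
    (df dg : ℕ)
    (hdf : IsLeast {q : ℕ | 1 ≤ q ∧ gradOrdPert f α q = (Lf : ℕ∞)} df)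
    (hdg : IsLeast {q : ℕ | 1 ≤ q ∧ gradOrdPert g β q = (Lg : ℕ∞)} dg) :
    df = dg := by
  have hΦ : IsBiholomorphGerm φ φinv :=
    ⟨hφ _ h0U, hφinv _ h0V, hφ0, eventually_of_mem (hUopen.mem_nhds h0U) hleft,
      eventually_of_mem (hVopen.mem_nhds h0V) hright⟩
  have hg0 : AnalyticAt ℂ g 0 := hg _ h0V
  have hα0' : (α 0, (0 : ℂ)) = 0 := by simp [hα0, Prod.mk_zero_zero]
  have hψan : AnalyticAt ℂ ψ 0 :=
    hψ ▸ analyticAt_snd.comp (hΦ.analyticAt.comp_of_eq (hα.prod analyticAt_id) hα0')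
  have hψ' := deriv_ne_zero_of_ord₀_eq_one hψan hψord
  have hβan : AnalyticAt ℂ β 0 := hβ ▸ analyticAt_fst.comp (hΦ.analyticAt.comp_of_eq
    ((hα.comp_of_eq hψinv hψinv0).prod hψinv) (by simp [hψinv0, hα0, Prod.mk_zero_zero]))
  have harc : ∀ᶠ y in 𝓝 0, φ (α y, y) = (β (ψ y), ψ y) := by
    filter_upwards [hψleft] with y hy
    simp only [hβ, hy]
    rw [hψ]
  have hL : (Lf : ℕ∞) = Lg := by
    rw [← hLf, ← hLg, min_ord₀_eq_gradientOrder (γ := fun y => (α y, y))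
      (by rw [hf, hα0']; exact hg0.comp_of_eq hΦ.analyticAt hΦ.map_zero) (hα.prod analyticAt_id),
      min_ord₀_eq_gradientOrder (γ := fun w => (β w, w))
        (by rwa [(hΦ.eq_zero_of_arc hα0 harc).2, Prod.mk_zero_zero]) (hβan.prod analyticAt_id)]
    exact hΦ.gradientOrder_arc_eq hg0 (by rw [hf]) hα hα0 hψan hψ' harc
  have hsets : {q : ℕ | 1 ≤ q ∧ gradOrdPert f α q = (Lf : ℕ∞)} =
      {q : ℕ | 1 ≤ q ∧ gradOrdPert g β q = (Lg : ℕ∞)} :=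
    Set.ext fun q => and_congr_right fun hq => by
      rw [hf, hΦ.gradOrdPert_eq hg0 hα hα0 hβan hψ' hψinv hψinv0 hψright harc (by omega), hL]
  exact hdf.unique (hsets ▸ hdg)

/-- With `φ = (φ₁,φ₂) : U → V` a biholomorphism fixing `0`, `g` analytic
on `V`, `f := g ∘ φ`, `α` an arc analytic near `0` with `α(0)=0`, `ψ(y) := φ₂(α(y),y)` of
vanishing order exactly `1`, `β(w) := φ₁(α(ψ⁻¹(w)), ψ⁻¹(w))`, `L_f` (resp. `L_g`) the
gradient order of `f` along `α` (resp. of `g` along `β`), and `d_f(α)` (resp. `d_g(β)`)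
the least `q ≥ 1` with `Λ_f(q) = L_f` (resp. `Λ_g(q) = L_g`), one has `d_f(α) = d_g(β)`:
the gradient degree of corresponding arcs is the same. -/
theorem gradient_degree_analytic_invariant
    (U V : Set (ℂ × ℂ)) (hUopen : IsOpen U) (hVopen : IsOpen V)
    (h0U : ((0 : ℂ), (0 : ℂ)) ∈ U) (h0V : ((0 : ℂ), (0 : ℂ)) ∈ V)
    (φ φinv : ℂ × ℂ → ℂ × ℂ)
    (hφ : ∀ p ∈ U, AnalyticAt ℂ φ p) (hφinv : ∀ p ∈ V, AnalyticAt ℂ φinv p)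
    (hφUV : Set.MapsTo φ U V) (hφinvVU : Set.MapsTo φinv V U)
    (hleft : ∀ p ∈ U, φinv (φ p) = p) (hright : ∀ p ∈ V, φ (φinv p) = p)
    (hφ0 : φ (0, 0) = (0, 0))
    (g : ℂ × ℂ → ℂ) (hg : ∀ p ∈ V, AnalyticAt ℂ g p)
    (f : ℂ × ℂ → ℂ) (hf : f = g ∘ φ)
    (α : ℂ → ℂ) (hα : AnalyticAt ℂ α 0) (hα0 : α 0 = 0)
    (ψ : ℂ → ℂ) (hψ : ψ = fun y => (φ (α y, y)).2)
    (hψord : ord₀ ψ = 1)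
    (ψinv : ℂ → ℂ) (hψinv : AnalyticAt ℂ ψinv 0) (hψinv0 : ψinv 0 = 0)
    (hψleft : ∀ᶠ y in nhds (0 : ℂ), ψinv (ψ y) = y)
    (hψright : ∀ᶠ w in nhds (0 : ℂ), ψ (ψinv w) = w)
    (β : ℂ → ℂ) (hβ : β = fun w => (φ (α (ψinv w), ψinv w)).1)
    (hne : ¬ ((∀ᶠ y in nhds (0 : ℂ), fderiv ℂ f (α y, y) (1, 0) = 0) ∧
              (∀ᶠ y in nhds (0 : ℂ), fderiv ℂ f (α y, y) (0, 1) = 0)))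
    (Lf Lg : ℕ)
    (hLf : min (ord₀ (fun y => fderiv ℂ f (α y, y) (1, 0)))
               (ord₀ (fun y => fderiv ℂ f (α y, y) (0, 1))) = (Lf : ℕ∞))
    (hLg : min (ord₀ (fun w => fderiv ℂ g (β w, w) (1, 0)))
               (ord₀ (fun w => fderiv ℂ g (β w, w) (0, 1))) = (Lg : ℕ∞))
    (df dg : ℕ)
    (hdf : IsLeast {q : ℕ | 1 ≤ q ∧ gradOrdPert f α q = (Lf : ℕ∞)} df)
    (hdg : IsLeast {q : ℕ | 1 ≤ q ∧ gradOrdPert g β q = (Lg : ℕ∞)} dg) :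
    df = dg :=
  gradient_degree_analytic_invariant_general U V hUopen hVopen h0U h0V φ φinv hφ hφinv hleft hright
    hφ0 g hg f hf α hα hα0 ψ hψ hψord ψinv hψinv hψinv0 hψleft hψright β hβ Lf Lg hLf hLg df dg hdf
    hdg
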